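/- The pullback under the map (v,T) ↦ (v, ε(v,T), p(v,T), T), with p = RT φ_v and ε = RT² φ_T, of the quadratic form κ = d(T⁻¹)·dε + d(pT⁻¹)·dv equals −R(φ_TT + 2T⁻¹φ_T) dT·dT + R φ_vv dv·dv. -/

import Mathlib

/-- Symmetric product of two 1-forms on ℝ⁴ (coordinates (v, ε, p, T)). -/
noncomputable def symp (ω η : (ℝ × ℝ × ℝ × ℝ) →L[ℝ] ℝ) (a b : ℝ × ℝ × ℝ × ℝ) : ℝ :=
  (ω a * η b + ω b * η a) / 2

set_option maxHeartbeats 2000000 in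
/-- The pullback of κ = d(T⁻¹)·dε + d(pT⁻¹)·dv under
(v,T) ↦ (v, ε(v,T), p(v,T), T) with p = RTφ_v, ε = RT²φ_T equals
−R(φ_TT + 2T⁻¹φ_T) dT·dT + Rφ_vv dv·dv. -/
theorem stmt5 (R : ℝ) (hR : 0 < R) (φ : ℝ → ℝ → ℝ)
    (hφ : ContDiff ℝ (⊤ : ℕ∞) fun q : ℝ × ℝ => φ q.1 q.2)
    (Φ : ℝ × ℝ → ℝ × ℝ × ℝ × ℝ)
    (hΦ : Φ = fun q => (q.1, R * q.2 ^ 2 * deriv (fun T' => φ q.1 T') q.2,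
        R * q.2 * deriv (fun v' => φ v' q.2) q.1, q.2))
    (v T : ℝ) (hT : 0 < T) (a b : ℝ × ℝ) :
    symp (fderiv ℝ (fun y : ℝ × ℝ × ℝ × ℝ => y.2.2.2⁻¹) (Φ (v, T)))
        (fderiv ℝ (fun y : ℝ × ℝ × ℝ × ℝ => y.2.1) (Φ (v, T)))
        (fderiv ℝ Φ (v, T) a) (fderiv ℝ Φ (v, T) b)
      + symp (fderiv ℝ (fun y : ℝ × ℝ × ℝ × ℝ => y.2.2.1 * y.2.2.2⁻¹) (Φ (v, T)))
        (fderiv ℝ (fun y : ℝ × ℝ × ℝ × ℝ => y.1) (Φ (v, T)))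
        (fderiv ℝ Φ (v, T) a) (fderiv ℝ Φ (v, T) b)
      = -R * (deriv (fun T' => deriv (fun T'' => φ v T'') T') T
            + 2 * T⁻¹ * deriv (fun T' => φ v T') T) * (a.2 * b.2)
        + R * deriv (fun v' => deriv (fun v'' => φ v'' T) v') v * (a.1 * b.1) := by
  have hT0 : T ≠ 0 := ne_of_gt hT
  set F : ℝ × ℝ → ℝ := fun q => φ q.1 q.2 with hFdef
  have hF : ContDiff ℝ (↑(⊤ : ℕ∞)) F := hφ.of_le (by simp)
  have hFdiff : Differentiable ℝ F := hF.differentiable (by norm_cast)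
  have hfd : ContDiff ℝ (↑(⊤ : ℕ∞)) (fderiv ℝ F) := (contDiff_infty_iff_fderiv.mp hF).2
  have hfdDiff : Differentiable ℝ (fderiv ℝ F) :=
    hfd.differentiable (by norm_cast)
  set φT : ℝ × ℝ → ℝ := fun q => fderiv ℝ F q (0, 1) with hφTdef
  set φv : ℝ × ℝ → ℝ := fun q => fderiv ℝ F q (1, 0) with hφvdef
  -- partial derivatives as `deriv`
  have hderT : ∀ q : ℝ × ℝ, HasDerivAt (fun T' => φ q.1 T') (φT q) q.2 := by
    intro q
    have h1 : HasDerivAt (fun T' : ℝ => ((q.1, T') : ℝ × ℝ)) (0, 1) q.2 :=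
      (hasDerivAt_const _ _).prodMk (hasDerivAt_id _)
    have h2 := ((hFdiff (q.1, q.2)).hasFDerivAt).comp_hasDerivAt q.2 h1
    simpa [Function.comp_def, hFdef] using h2
  have hderv : ∀ q : ℝ × ℝ, HasDerivAt (fun v' => φ v' q.2) (φv q) q.1 := by
    intro q
    have h1 : HasDerivAt (fun v' : ℝ => ((v', q.2) : ℝ × ℝ)) (1, 0) q.1 :=
      (hasDerivAt_id _).prodMk (hasDerivAt_const _ _)
    have h2 := ((hFdiff (q.1, q.2)).hasFDerivAt).comp_hasDerivAt q.1 h1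
    simpa [Function.comp_def, hFdef] using h2
  have hΦ' : Φ = fun q : ℝ × ℝ => (q.1, R * q.2 ^ 2 * φT q, R * q.2 * φv q, q.2) := by
    rw [hΦ]; funext q; simp [(hderT q).deriv, (hderv q).deriv]
  set pt : ℝ × ℝ := (v, T) with hpt
  set B : (ℝ × ℝ) →L[ℝ] (ℝ × ℝ) →L[ℝ] ℝ := fderiv ℝ (fderiv ℝ F) pt with hB
  -- φT and φv as compositions, and their derivatives
  have hφTeq : φT = fun q => (ContinuousLinearMap.apply ℝ ℝ ((0, 1) : ℝ × ℝ)) (fderiv ℝ F q) := by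
    funext q; rfl
  have hφveq : φv = fun q => (ContinuousLinearMap.apply ℝ ℝ ((1, 0) : ℝ × ℝ)) (fderiv ℝ F q) := by
    funext q; rfl
  have hφTd : HasFDerivAt φT
      ((ContinuousLinearMap.apply ℝ ℝ ((0, 1) : ℝ × ℝ)).comp B) pt := by
    rw [hφTeq]
    exact (ContinuousLinearMap.apply ℝ ℝ ((0, 1) : ℝ × ℝ)).hasFDerivAt.comp pt
      (hfdDiff pt).hasFDerivAt
  have hφvd : HasFDerivAt φv
      ((ContinuousLinearMap.apply ℝ ℝ ((1, 0) : ℝ × ℝ)).comp B) pt := by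
    rw [hφveq]
    exact (ContinuousLinearMap.apply ℝ ℝ ((1, 0) : ℝ × ℝ)).hasFDerivAt.comp pt
      (hfdDiff pt).hasFDerivAt
  -- second derivative symmetry
  have hsymm : ∀ x y : ℝ × ℝ, B x y = B y x := by
    intro x y
    exact second_derivative_symmetric (fun z => (hFdiff z).hasFDerivAt)
      (hfdDiff pt).hasFDerivAt x y
  -- second derivatives in RHS
  have hTT : deriv (fun T' => deriv (fun T'' => φ v T'') T') T = B (0, 1) (0, 1) := by
    have h1 : (fun T' => deriv (fun T'' => φ v T'') T') = fun T' => φT (v, T') := by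
      funext T'; exact (hderT (v, T')).deriv
    rw [h1]
    have hcomp : HasDerivAt (fun T' : ℝ => ((v, T') : ℝ × ℝ)) (0, 1) T :=
      (hasDerivAt_const _ _).prodMk (hasDerivAt_id _)
    have h2 := hφTd.comp_hasDerivAt T hcomp
    simpa [Function.comp_def] using h2.deriv
  have hvv : deriv (fun v' => deriv (fun v'' => φ v'' T) v') v = B (1, 0) (1, 0) := by
    have h1 : (fun v' => deriv (fun v'' => φ v'' T) v') = fun v' => φv (v', T) := by
      funext v'; exact (hderv (v', T)).deriv
    rw [h1]
    have hcomp : HasDerivAt (fun v' : ℝ => ((v', T) : ℝ × ℝ)) (1, 0) v :=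
      (hasDerivAt_id _).prodMk (hasDerivAt_const _ _)
    have h2 := hφvd.comp_hasDerivAt v hcomp
    simpa [Function.comp_def] using h2.deriv
  have hT1 : deriv (fun T' => φ v T') T = φT pt := (hderT pt).deriv
  -- derivative of Φ
  have hq2sq : HasFDerivAt (fun q : ℝ × ℝ => R * q.2 ^ 2)
      ((R * (2 * T)) • ContinuousLinearMap.snd ℝ ℝ ℝ) pt := by
    have h1 : HasFDerivAt (fun q : ℝ × ℝ => q.2) (ContinuousLinearMap.snd ℝ ℝ ℝ) pt :=
      hasFDerivAt_snd
    have h2 := (h1.fun_mul h1).const_mul R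
    have hfun : (fun q : ℝ × ℝ => R * q.2 ^ 2) = fun y => R * (y.2 * y.2) := by
      funext q; ring
    rw [hfun]
    exact h2.congr_fderiv (by ext w <;> simp [pt] <;> ring)
  have hq2 : HasFDerivAt (fun q : ℝ × ℝ => R * q.2)
      (R • ContinuousLinearMap.snd ℝ ℝ ℝ) pt := by
    have h1 : HasFDerivAt (fun q : ℝ × ℝ => q.2) (ContinuousLinearMap.snd ℝ ℝ ℝ) pt :=
      hasFDerivAt_snd
    exact h1.const_mul R
  have hε : HasFDerivAt (fun q : ℝ × ℝ => R * q.2 ^ 2 * φT q)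
      ((R * T ^ 2) • ((ContinuousLinearMap.apply ℝ ℝ ((0, 1) : ℝ × ℝ)).comp B)
        + φT pt • ((R * (2 * T)) • ContinuousLinearMap.snd ℝ ℝ ℝ)) pt := by
    have := hq2sq.fun_mul hφTd
    simpa [pt] using this
  have hp : HasFDerivAt (fun q : ℝ × ℝ => R * q.2 * φv q)
      ((R * T) • ((ContinuousLinearMap.apply ℝ ℝ ((1, 0) : ℝ × ℝ)).comp B)
        + φv pt • (R • ContinuousLinearMap.snd ℝ ℝ ℝ)) pt := by
    have := hq2.fun_mul hφvd
    simpa [pt] using this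
  have hΦd : HasFDerivAt Φ
      ((ContinuousLinearMap.fst ℝ ℝ ℝ).prod
        (((R * T ^ 2) • ((ContinuousLinearMap.apply ℝ ℝ ((0, 1) : ℝ × ℝ)).comp B)
          + φT pt • ((R * (2 * T)) • ContinuousLinearMap.snd ℝ ℝ ℝ)).prod
          ((((R * T) • ((ContinuousLinearMap.apply ℝ ℝ ((1, 0) : ℝ × ℝ)).comp B)
            + φv pt • (R • ContinuousLinearMap.snd ℝ ℝ ℝ))).prod
            (ContinuousLinearMap.snd ℝ ℝ ℝ)))) pt := by
    rw [hΦ']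
    exact (hasFDerivAt_fst).prodMk (hε.prodMk (hp.prodMk hasFDerivAt_snd))
  have hΦfd := hΦd.fderiv
  -- value of Φ at pt
  have hΦval : Φ pt = (v, R * T ^ 2 * φT pt, R * T * φv pt, T) := by
    rw [hΦ']
  -- the 1-forms
  have h4 : HasFDerivAt (fun y : ℝ × ℝ × ℝ × ℝ => y.2.2.2)
      ((ContinuousLinearMap.snd ℝ ℝ ℝ).comp
        ((ContinuousLinearMap.snd ℝ ℝ (ℝ × ℝ)).comp
          (ContinuousLinearMap.snd ℝ ℝ (ℝ × ℝ × ℝ)))) (Φ pt) := by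
    exact (hasFDerivAt_snd.comp _ (hasFDerivAt_snd.comp _ hasFDerivAt_snd))
  have h3 : HasFDerivAt (fun y : ℝ × ℝ × ℝ × ℝ => y.2.2.1)
      ((ContinuousLinearMap.fst ℝ ℝ ℝ).comp
        ((ContinuousLinearMap.snd ℝ ℝ (ℝ × ℝ)).comp
          (ContinuousLinearMap.snd ℝ ℝ (ℝ × ℝ × ℝ)))) (Φ pt) := by
    exact (hasFDerivAt_fst.comp _ (hasFDerivAt_snd.comp _ hasFDerivAt_snd))
  have h2' : HasFDerivAt (fun y : ℝ × ℝ × ℝ × ℝ => y.2.1)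
      ((ContinuousLinearMap.fst ℝ ℝ (ℝ × ℝ)).comp
        (ContinuousLinearMap.snd ℝ ℝ (ℝ × ℝ × ℝ))) (Φ pt) := by
    exact (hasFDerivAt_fst.comp _ hasFDerivAt_snd)
  have h1' : HasFDerivAt (fun y : ℝ × ℝ × ℝ × ℝ => y.1)
      (ContinuousLinearMap.fst ℝ ℝ (ℝ × ℝ × ℝ)) (Φ pt) := hasFDerivAt_fst
  have hval4 : (Φ pt).2.2.2 = T := by rw [hΦval]
  have hval3 : (Φ pt).2.2.1 = R * T * φv pt := by rw [hΦval]
  have hinv : HasFDerivAt (fun y : ℝ × ℝ × ℝ × ℝ => y.2.2.2⁻¹)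
      (-((T ^ 2)⁻¹ • ((ContinuousLinearMap.snd ℝ ℝ ℝ).comp
        ((ContinuousLinearMap.snd ℝ ℝ (ℝ × ℝ)).comp
          (ContinuousLinearMap.snd ℝ ℝ (ℝ × ℝ × ℝ)))))) (Φ pt) := by
    have hne : (Φ pt).2.2.2 ≠ 0 := by rw [hval4]; exact hT0
    have := (hasDerivAt_inv hne).comp_hasFDerivAt (Φ pt) h4
    rw [hval4] at this
    simpa [Function.comp_def, neg_smul] using this
  have hpTinv : HasFDerivAt (fun y : ℝ × ℝ × ℝ × ℝ => y.2.2.1 * y.2.2.2⁻¹)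
      ((R * T * φv pt) • (-((T ^ 2)⁻¹ • ((ContinuousLinearMap.snd ℝ ℝ ℝ).comp
          ((ContinuousLinearMap.snd ℝ ℝ (ℝ × ℝ)).comp
            (ContinuousLinearMap.snd ℝ ℝ (ℝ × ℝ × ℝ))))))
        + T⁻¹ • ((ContinuousLinearMap.fst ℝ ℝ ℝ).comp
          ((ContinuousLinearMap.snd ℝ ℝ (ℝ × ℝ)).comp
            (ContinuousLinearMap.snd ℝ ℝ (ℝ × ℝ × ℝ))))) (Φ pt) := by
    have := h3.fun_mul hinv
    rwa [hval3, hval4] at this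
  -- decomposition of B applied to vectors
  have hdec : ∀ w : ℝ × ℝ, ∀ u : ℝ × ℝ, B w u = w.1 * B (1, 0) u + w.2 * B (0, 1) u := by
    intro w u
    have hw : w = w.1 • ((1, 0) : ℝ × ℝ) + w.2 • ((0, 1) : ℝ × ℝ) := by
      simp [Prod.ext_iff]
    conv_lhs => rw [hw, map_add, map_smul, map_smul]
    simp only [ContinuousLinearMap.add_apply, ContinuousLinearMap.smul_apply, smul_eq_mul]
  rw [hinv.fderiv, h2'.fderiv, hpTinv.fderiv, h1'.fderiv, hΦfd]
  simp only [symp, ContinuousLinearMap.prod_apply, ContinuousLinearMap.add_apply,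
    ContinuousLinearMap.smul_apply, ContinuousLinearMap.coe_comp', Function.comp_apply,
    ContinuousLinearMap.coe_snd', ContinuousLinearMap.coe_fst',
    ContinuousLinearMap.apply_apply, ContinuousLinearMap.neg_apply, smul_eq_mul]
  rw [hTT, hvv, hT1]
  rw [hdec a (0,1), hdec b (0,1), hdec a (1,0), hdec b (1,0), hsymm (0,1) (1,0)]
  field_simp
  ring
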